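/- Let Pf, Pm, γf, γm, ATEf, ATEm be real numbers with Pf ≠ 0, Pm ≠ 0, Pf − γf ≠ 0, Pm − γm ≠ 0, and suppose the NTD assumption γf/Pf = γm/Pm holds. Define θg = ATEg/Pg, δθ(g) = (ATEg + γg)/(Pg − γg), and δAPO(m) = Pm − γm. Then θf − θm = (δθ(f) − δθ(m)) · δAPO(m)/Pm. That is, if fathers' counterfactual average potential outcome Pm is known, then the causal gender gap in normalized effects is identified by multiplying the descriptive gender gap in normalized DID by the ratio of the DID counterfactual mean for fathers to fathers' true counterfactual mean. -/

import Mathlib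

/-!
Write `ρ = γ/P` for the normalized trend, which Assumption NTD-PT makes equal for mothers and
fathers. Dividing numerator and denominator by `P` gives `δθ(g) = (θg + ρ) / (1 - ρ)`, so the
DID gap is `(θf - θm) / (1 - ρ)`, while `δAPO(m) / Pm = 1 - ρ` undoes exactly that factor.
-/

theorem add_div_sub_eq_div_one_sub_div {A P γ : ℝ} (hP : P ≠ 0) :
    (A + γ) / (P - γ) = (A / P + γ / P) / (1 - γ / P) := by
  rw [← add_div, one_sub_div hP, div_div_div_cancel_right₀ hP]

theorem stmt_6_general (Pf Pm γf γm ATEf ATEm : ℝ)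
    (hPf : Pf ≠ 0) (hPm : Pm ≠ 0)
    (hm : Pm - γm ≠ 0)
    (hNTD : γf / Pf = γm / Pm)
    (θf θm δθf δθm δAPOm : ℝ)
    (hθf : θf = ATEf / Pf) (hθm : θm = ATEm / Pm)
    (hδθf : δθf = (ATEf + γf) / (Pf - γf))
    (hδθm : δθm = (ATEm + γm) / (Pm - γm))
    (hδAPOm : δAPOm = Pm - γm) :
    θf - θm = (δθf - δθm) * (δAPOm / Pm) := by
  have hρ : 1 - γm / Pm ≠ 0 := by
    rw [one_sub_div hPm]
    exact div_ne_zero hm hPm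
  rw [hδθf, hδθm, hδAPOm, add_div_sub_eq_div_one_sub_div hPf,
    add_div_sub_eq_div_one_sub_div hPm, hNTD, ← one_sub_div hPm, ← sub_div,
    div_mul_cancel₀ _ hρ, hθf, hθm]
  ring

/-- Proposition 2 (bias correction): under Assumption NTD-PT, if fathers' counterfactual
average potential outcome is known, the causal gender gap in normalized effects is obtained
by multiplying the descriptive gender gap in normalized DID by the ratio of the DID
counterfactual mean for fathers to fathers' true counterfactual mean. -/
theorem stmt_6 (Pf Pm γf γm ATEf ATEm : ℝ)
    (hPf : Pf ≠ 0) (hPm : Pm ≠ 0)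
    (hf : Pf - γf ≠ 0) (hm : Pm - γm ≠ 0)
    (hNTD : γf / Pf = γm / Pm)
    (θf θm δθf δθm δAPOm : ℝ)
    (hθf : θf = ATEf / Pf) (hθm : θm = ATEm / Pm)
    (hδθf : δθf = (ATEf + γf) / (Pf - γf))
    (hδθm : δθm = (ATEm + γm) / (Pm - γm))
    (hδAPOm : δAPOm = Pm - γm) :
    θf - θm = (δθf - δθm) * (δAPOm / Pm) :=
  stmt_6_general Pf Pm γf γm ATEf ATEm hPf hPm hm hNTD θf θm δθf δθm δAPOm hθf hθm hδθf hδθm hδAPOm
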